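/- Under the hypotheses of the preceding lower bound, if M' := ceil(2(∑_m |g_m|)² / (Δ ∑_m |g_m|²)), then for every integer k₀ there exists k ∈ {k₀, …, k₀ + M' − 1} with |∑_{m=0}^{n−1} g_m e^{−iπkx_m}|² ≥ (1/2) ∑_m |g_m|². -/

import Mathlib

open Complex Real Finset

lemma abs_exp_I_sub_one (φ : ℝ) :
    ‖Complex.exp ((φ:ℂ) * Complex.I) - 1‖ = 2 * |Real.sin (φ/2)| := by
  have hc : Real.cos φ = 1 - 2 * Real.sin (φ/2)^2 := by
    have h1 := Real.sin_sq_add_cos_sq (φ/2)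
    have h2 := Real.cos_two_mul (φ/2)
    have h3 : (2:ℝ) * (φ/2) = φ := by ring
    rw [h3] at h2; nlinarith
  have hs : Real.sin φ = 2 * Real.sin (φ/2) * Real.cos (φ/2) := by
    have h2 := Real.sin_two_mul (φ/2)
    have h3 : (2:ℝ) * (φ/2) = φ := by ring
    rw [h3] at h2; linarith
  have hid : Complex.exp ((φ:ℂ) * Complex.I) - 1
      = ((2 * Real.sin (φ/2) : ℝ) : ℂ) * (Complex.I * Complex.exp (((φ/2 : ℝ):ℂ) * Complex.I)) := by
    rw [Complex.exp_mul_I, Complex.exp_mul_I, ← Complex.ofReal_cos, ← Complex.ofReal_sin,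
      ← Complex.ofReal_cos, ← Complex.ofReal_sin, hc, hs]
    set s := Real.sin (φ/2)
    set c := Real.cos (φ/2)
    push_cast
    linear_combination (-2*(Real.sin (φ/2):ℂ)^2) * Complex.I_sq
  rw [hid, norm_mul, norm_mul, Complex.norm_real, Complex.norm_I, Complex.norm_exp]
  simp [abs_mul, Complex.mul_re]

lemma geo_bound (θ : ℝ) (hs : Real.sin (π * θ / 2) ≠ 0) (c : ℤ) (M : ℕ) :
    ‖∑ k ∈ Finset.range M,
      Complex.exp (-Complex.I * π * ((c:ℂ) + (k:ℂ)) * (θ:ℂ))‖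
      ≤ 1 / |Real.sin (π * θ / 2)| := by
  set z : ℂ := Complex.exp (-Complex.I * π * (θ:ℂ)) with hz
  have hzabs : ‖z‖ = 1 := by
    rw [hz, Complex.norm_exp]
    simp [Complex.mul_re]
  have hzsub : ‖z - 1‖ = 2 * |Real.sin (π * θ / 2)| := by
    have h1 : z = Complex.exp (((-(π * θ) : ℝ) : ℂ) * Complex.I) := by
      rw [hz]; congr 1; push_cast; ring
    rw [h1, abs_exp_I_sub_one]
    rw [show -(π*θ)/2 = -(π*θ/2) by ring, Real.sin_neg, abs_neg]
  have hzne : z ≠ 1 := by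
    intro h
    rw [h, sub_self, norm_zero] at hzsub
    have : |Real.sin (π * θ / 2)| > 0 := abs_pos.mpr hs
    linarith
  have hterm : ∀ k : ℕ, Complex.exp (-Complex.I * π * ((c:ℂ) + (k:ℂ)) * (θ:ℂ))
      = Complex.exp (-Complex.I * π * (c:ℂ) * (θ:ℂ)) * z ^ k := by
    intro k
    rw [hz, ← Complex.exp_nat_mul, ← Complex.exp_add]
    congr 1; ring
  calc ‖∑ k ∈ Finset.range M,
        Complex.exp (-Complex.I * π * ((c:ℂ) + (k:ℂ)) * (θ:ℂ))‖
      = ‖Complex.exp (-Complex.I * π * (c:ℂ) * (θ:ℂ))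
          * ∑ k ∈ Finset.range M, z ^ k‖ := by
        rw [Finset.mul_sum]; congr 1; exact Finset.sum_congr rfl fun k _ => hterm k
    _ = ‖∑ k ∈ Finset.range M, z ^ k‖ := by
        rw [norm_mul, Complex.norm_exp]
        simp [Complex.mul_re]
    _ = ‖(z ^ M - 1) / (z - 1)‖ := by rw [geom_sum_eq hzne]
    _ ≤ 2 / (2 * |Real.sin (π * θ / 2)|) := by
        rw [norm_div, hzsub]
        have hpos : 0 < 2 * |Real.sin (π * θ / 2)| := by
          have := abs_pos.mpr hs; linarith
        refine (div_le_div_iff_of_pos_right hpos).mpr ?_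
        have h2 : ‖z ^ M - 1‖ ≤ ‖z ^ M‖ + 1 := by
          simpa using norm_sub_le (z ^ M) 1
        have h3 : ‖z ^ M‖ = 1 := by rw [norm_pow, hzabs, one_pow]
        linarith
    _ = 1 / |Real.sin (π * θ / 2)| := by
        have := abs_pos.mpr hs
        rw [div_eq_div_iff (by linarith) (by linarith)]; ring

lemma sin_lower {n : ℕ} (x : Fin n → ℝ) (hx : StrictMono x)
    (hx' : ∀ m, x m ∈ Set.Ico (-1 : ℝ) 1)
    (hP : (Finset.univ.filter fun p : Fin n × Fin n => p.1 < p.2).Nonempty)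
    (Δ : ℝ)
    (hΔ : Δ = Real.sin (π / 2 *
      ((Finset.univ.filter fun p : Fin n × Fin n => p.1 < p.2).inf' hP
        (fun p => min (x p.2 - x p.1) (2 - (x p.2 - x p.1))))))
    {m₁ m₂ : Fin n} (hne : m₁ ≠ m₂) :
    Δ ≤ |Real.sin (π * (x m₁ - x m₂) / 2)| := by
  set δ := ((Finset.univ.filter fun p : Fin n × Fin n => p.1 < p.2).inf' hP
        (fun p => min (x p.2 - x p.1) (2 - (x p.2 - x p.1)))) with hδ
  have hδpos : 0 < δ := by
    rw [hδ, Finset.lt_inf'_iff]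
    intro p hp
    have hlt : p.1 < p.2 := (Finset.mem_filter.mp hp).2
    have h1 : x p.1 < x p.2 := hx hlt
    have h2 := hx' p.1
    have h3 := hx' p.2
    simp only [Set.mem_Ico] at h2 h3
    exact lt_min (by linarith) (by linarith)
  -- reduce to ordered pair
  have key : ∀ a b : Fin n, a < b → Δ ≤ |Real.sin (π * (x b - x a) / 2)| := by
    intro a b hab
    set t := x b - x a with htdef
    have ht0 : 0 < t := sub_pos.mpr (hx hab)
    have ha := hx' a; have hb := hx' b
    simp only [Set.mem_Ico] at ha hb
    have ht2 : t < 2 := by rw [htdef]; linarith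
    have hmin : δ ≤ min t (2 - t) := by
      rw [hδ]
      exact Finset.inf'_le _ (Finset.mem_filter.mpr ⟨Finset.mem_univ (a, b), hab⟩)
    set m := min t (2 - t) with hm
    have hm1 : m ≤ 1 := by
      rcases le_total t 1 with h | h
      · exact le_trans (min_le_left _ _) h
      · exact le_trans (min_le_right _ _) (by linarith)
    have hsin_eq : |Real.sin (π * t / 2)| = Real.sin (π * m / 2) := by
      rcases le_total t (2 - t) with h | h
      · rw [hm, min_eq_left h]
        exact abs_of_nonneg (Real.sin_nonneg_of_nonneg_of_le_pi
          (by positivity) (by nlinarith [Real.pi_pos]))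
      · rw [hm, min_eq_right h]
        have : π * (2 - t) / 2 = π - π * t / 2 := by ring
        rw [this, Real.sin_pi_sub]
        exact abs_of_nonneg (Real.sin_nonneg_of_nonneg_of_le_pi
          (by positivity) (by nlinarith [Real.pi_pos]))
    rw [hsin_eq, hΔ]
    have harg : π / 2 * δ ≤ π * m / 2 := by nlinarith [Real.pi_pos]
    have hmem1 : π / 2 * δ ∈ Set.Icc (-(π/2)) (π/2) := by
      constructor <;> nlinarith [Real.pi_pos, hmin.trans hm1]
    have hmem2 : π * m / 2 ∈ Set.Icc (-(π/2)) (π/2) := by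
      have hmpos : 0 < m := lt_of_lt_of_le hδpos hmin
      constructor <;> nlinarith [Real.pi_pos]
    exact Real.strictMonoOn_sin.monotoneOn hmem1 hmem2 harg
  rcases hne.lt_or_gt with h | h
  · have := key m₁ m₂ h
    have hab : |Real.sin (π * (x m₁ - x m₂) / 2)| = |Real.sin (π * (x m₂ - x m₁) / 2)| := by
      rw [show π * (x m₁ - x m₂) / 2 = -(π * (x m₂ - x m₁) / 2) by ring, Real.sin_neg, abs_neg]
    rw [hab]; exact this
  · exact key m₂ m₁ h

set_option maxHeartbeats 1000000 in
/-- In the setting of the exponential-sum lower bound, taking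
`M' = ⌈2(∑_m |g_m|)² / (Δ ∑_m |g_m|²)⌉`, every window `{k₀, …, k₀+M'-1}` contains some `k` with
`|∑_m g_m e^{-iπk x_m}|² ≥ (1/2) ∑_m |g_m|²`. -/
theorem exists_large_exponential_sum {n : ℕ} (hn : 2 ≤ n)
    (g : Fin n → ℂ) (hg : ∃ m, g m ≠ 0)
    (x : Fin n → ℝ) (hx : StrictMono x) (hx' : ∀ m, x m ∈ Set.Ico (-1 : ℝ) 1)
    (hP : (Finset.univ.filter fun p : Fin n × Fin n => p.1 < p.2).Nonempty)
    (Δ : ℝ)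
    (hΔ : Δ = Real.sin (π / 2 *
      ((Finset.univ.filter fun p : Fin n × Fin n => p.1 < p.2).inf' hP
        (fun p => min (x p.2 - x p.1) (2 - (x p.2 - x p.1))))))
    (hΔpos : 0 < Δ)
    (M' : ℕ)
    (hM' : M' = ⌈2 * (∑ m, ‖g m‖) ^ 2 / (Δ * ∑ m, ‖g m‖ ^ 2)⌉₊)
    (k₀ : ℤ) :
    ∃ k ∈ Finset.range M',
      (1 / 2) * ∑ m, ‖g m‖ ^ 2
        ≤ ‖∑ m, g m *
            Complex.exp (-Complex.I * π * ((k₀ : ℂ) + (k : ℂ)) * (x m : ℂ))‖ ^ 2 := by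
  classical
  set G1 := ∑ m, ‖g m‖ with hG1
  set G2 := ∑ m, ‖g m‖ ^ 2 with hG2
  obtain ⟨m0, hm0⟩ := hg
  have habs0 : 0 < ‖g m0‖ := norm_pos_iff.mpr hm0
  have hG2pos : 0 < G2 :=
    Finset.sum_pos' (fun m _ => by positivity) ⟨m0, Finset.mem_univ m0, by positivity⟩
  have hG1pos : 0 < G1 :=
    Finset.sum_pos' (fun m _ => norm_nonneg _) ⟨m0, Finset.mem_univ m0, habs0⟩
  have hM'ge : 2 * G1 ^ 2 / (Δ * G2) ≤ (M' : ℝ) := by rw [hM']; exact Nat.le_ceil _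
  have hM'pos : 0 < M' := by
    rw [hM']
    exact Nat.ceil_pos.mpr (by positivity)
  by_contra hcon
  push_neg at hcon
  -- the Dirichlet-kernel sums
  set D : Fin n → Fin n → ℂ := fun m₁ m₂ => ∑ k ∈ Finset.range M',
    Complex.exp (-Complex.I * π * ((k₀:ℂ) + (k:ℂ)) * ((x m₁ : ℂ) - (x m₂ : ℂ))) with hD
  have hDdiag : ∀ m, D m m = (M' : ℂ) := by
    intro m
    simp [hD]
  have hDoff : ∀ m₁ m₂, m₁ ≠ m₂ → ‖D m₁ m₂‖ ≤ 1 / Δ := by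
    intro m₁ m₂ hne
    have hsin := sin_lower x hx hx' hP Δ hΔ hne
    have hspos : 0 < |Real.sin (π * (x m₁ - x m₂) / 2)| := lt_of_lt_of_le hΔpos hsin
    have hsne : Real.sin (π * (x m₁ - x m₂) / 2) ≠ 0 := by
      intro h; rw [h, abs_zero] at hspos; exact lt_irrefl _ hspos
    have hDeq : D m₁ m₂ = ∑ k ∈ Finset.range M',
        Complex.exp (-Complex.I * π * ((k₀:ℂ) + (k:ℂ)) * ((x m₁ - x m₂ : ℝ) : ℂ)) :=
      Finset.sum_congr rfl fun k _ => congrArg Complex.exp (by push_cast; ring)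
    calc ‖D m₁ m₂‖
        ≤ 1 / |Real.sin (π * (x m₁ - x m₂) / 2)| := by
          rw [hDeq]; exact geo_bound _ hsne k₀ M'
      _ ≤ 1 / Δ := one_div_le_one_div_of_le hΔpos hsin
  -- expansion of |S(k)|²
  have hexpand : ∀ k : ℕ,
      ‖∑ m, g m *
        Complex.exp (-Complex.I * π * ((k₀ : ℂ) + (k : ℂ)) * (x m : ℂ))‖ ^ 2
      = ∑ m₁, ∑ m₂, (g m₁ * (starRingEnd ℂ) (g m₂) *
          Complex.exp (-Complex.I * π * ((k₀:ℂ) + (k:ℂ)) * ((x m₁ : ℂ) - (x m₂ : ℂ)))).re := by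
    intro k
    set c : ℂ := (k₀:ℂ) + (k:ℂ) with hc
    have hcr : (starRingEnd ℂ) c = c := by simp [hc]
    set S := ∑ m, g m * Complex.exp (-Complex.I * π * c * (x m : ℂ)) with hS
    have h1 : ‖S‖ ^ 2 = (S * (starRingEnd ℂ) S).re := by
      rw [Complex.mul_conj, Complex.sq_norm, Complex.ofReal_re]
    have h2 : S * (starRingEnd ℂ) S = ∑ m₁, ∑ m₂, g m₁ * (starRingEnd ℂ) (g m₂) *
        Complex.exp (-Complex.I * π * c * ((x m₁ : ℂ) - (x m₂ : ℂ))) := by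
      rw [hS, map_sum, Finset.sum_mul_sum]
      refine Finset.sum_congr rfl fun m₁ _ => Finset.sum_congr rfl fun m₂ _ => ?_
      rw [map_mul, ← Complex.exp_conj]
      have h3 : (starRingEnd ℂ) (-Complex.I * π * c * (x m₂ : ℂ))
          = Complex.I * π * c * (x m₂ : ℂ) := by
        rw [map_mul, map_mul, map_mul, map_neg, Complex.conj_I, hcr, Complex.conj_ofReal,
          Complex.conj_ofReal]
        ring
      rw [h3, mul_mul_mul_comm, ← Complex.exp_add]
      congr 2
      ring
    rw [h1, h2, Complex.re_sum]
    exact Finset.sum_congr rfl fun m₁ _ => Complex.re_sum _ _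
  -- swap sums
  have hswap : ∑ k ∈ Finset.range M', ‖∑ m, g m *
        Complex.exp (-Complex.I * π * ((k₀ : ℂ) + (k : ℂ)) * (x m : ℂ))‖ ^ 2
      = ∑ m₁, ∑ m₂, (g m₁ * (starRingEnd ℂ) (g m₂) * D m₁ m₂).re := by
    rw [Finset.sum_congr rfl fun k hk => hexpand k, Finset.sum_comm]
    refine Finset.sum_congr rfl fun m₁ _ => ?_
    rw [Finset.sum_comm]
    refine Finset.sum_congr rfl fun m₂ _ => ?_
    rw [← Complex.re_sum, ← Finset.mul_sum]
  -- lower bound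
  have hlow : (M':ℝ) * G2 - G1 ^ 2 / Δ
      ≤ ∑ m₁, ∑ m₂, (g m₁ * (starRingEnd ℂ) (g m₂) * D m₁ m₂).re := by
    have hinner : ∀ m₁ : Fin n, (M':ℝ) * ‖g m₁‖ ^ 2
        - ‖g m₁‖ * G1 / Δ
        ≤ ∑ m₂, (g m₁ * (starRingEnd ℂ) (g m₂) * D m₁ m₂).re := by
      intro m₁
      rw [← Finset.sum_erase_add _ _ (Finset.mem_univ m₁)]
      have hdiag : (g m₁ * (starRingEnd ℂ) (g m₁) * D m₁ m₁).re
          = ‖g m₁‖ ^ 2 * M' := by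
        rw [hDdiag, Complex.mul_conj, ← Complex.ofReal_natCast, ← Complex.ofReal_mul,
          Complex.ofReal_re, Complex.sq_norm]
      have hoff : ∀ m₂ ∈ Finset.univ.erase m₁,
          -(‖g m₁‖ * ‖g m₂‖ / Δ)
          ≤ (g m₁ * (starRingEnd ℂ) (g m₂) * D m₁ m₂).re := by
        intro m₂ hm₂
        have hne : m₂ ≠ m₁ := Finset.ne_of_mem_erase hm₂
        have habs : ‖g m₁ * (starRingEnd ℂ) (g m₂) * D m₁ m₂‖
            ≤ ‖g m₁‖ * ‖g m₂‖ / Δ := by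
          rw [norm_mul, norm_mul, Complex.norm_conj]
          calc ‖g m₁‖ * ‖g m₂‖ * ‖D m₁ m₂‖
              ≤ ‖g m₁‖ * ‖g m₂‖ * (1 / Δ) :=
                mul_le_mul_of_nonneg_left (hDoff m₁ m₂ hne.symm) (by positivity)
            _ = ‖g m₁‖ * ‖g m₂‖ / Δ := by ring
        have h4 := Complex.abs_re_le_norm (g m₁ * (starRingEnd ℂ) (g m₂) * D m₁ m₂)
        have h5 := neg_abs_le ((g m₁ * (starRingEnd ℂ) (g m₂) * D m₁ m₂).re)
        linarith
      have hsumoff : -(‖g m₁‖ * G1 / Δ)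
          ≤ ∑ m₂ ∈ Finset.univ.erase m₁, (g m₁ * (starRingEnd ℂ) (g m₂) * D m₁ m₂).re := by
        have h6 : ∑ m₂ ∈ Finset.univ.erase m₁, ‖g m₂‖ ≤ G1 := by
          rw [hG1]
          exact Finset.sum_le_sum_of_subset_of_nonneg (Finset.erase_subset _ _)
            (fun _ _ _ => norm_nonneg _)
        calc -(‖g m₁‖ * G1 / Δ)
            ≤ -(‖g m₁‖ * (∑ m₂ ∈ Finset.univ.erase m₁, ‖g m₂‖) / Δ) := by
              have : ‖g m₁‖ * (∑ m₂ ∈ Finset.univ.erase m₁, ‖g m₂‖) / Δ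
                  ≤ ‖g m₁‖ * G1 / Δ := by
                apply div_le_div_of_nonneg_right ?_ hΔpos.le
                exact mul_le_mul_of_nonneg_left h6 (norm_nonneg _)
              linarith
          _ = ∑ m₂ ∈ Finset.univ.erase m₁,
                -(‖g m₁‖ * ‖g m₂‖ / Δ) := by
              rw [Finset.sum_neg_distrib, ← Finset.sum_div, ← Finset.mul_sum]
          _ ≤ _ := Finset.sum_le_sum hoff
      linarith
    calc (M':ℝ) * G2 - G1 ^ 2 / Δ
        = ∑ m₁, ((M':ℝ) * ‖g m₁‖ ^ 2 - ‖g m₁‖ * G1 / Δ) := by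
          rw [Finset.sum_sub_distrib, ← Finset.mul_sum, ← Finset.sum_div, ← Finset.sum_mul,
            ← hG1, ← hG2]
          ring
      _ ≤ _ := Finset.sum_le_sum fun m₁ _ => hinner m₁
  -- upper bound from the contradiction hypothesis
  have hup : ∑ k ∈ Finset.range M', ‖∑ m, g m *
        Complex.exp (-Complex.I * π * ((k₀ : ℂ) + (k : ℂ)) * (x m : ℂ))‖ ^ 2
      < (M':ℝ) * (1 / 2 * G2) := by
    have hne : (Finset.range M').Nonempty := Finset.nonempty_range_iff.mpr hM'pos.ne'
    calc ∑ k ∈ Finset.range M', ‖∑ m, g m *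
          Complex.exp (-Complex.I * π * ((k₀ : ℂ) + (k : ℂ)) * (x m : ℂ))‖ ^ 2
        < ∑ _k ∈ Finset.range M', (1 / 2 * G2) :=
          Finset.sum_lt_sum_of_nonempty hne fun k hk => hcon k hk
      _ = (M':ℝ) * (1 / 2 * G2) := by
          rw [Finset.sum_const, Finset.card_range, nsmul_eq_mul]
  rw [hswap] at hup
  have h7 : 2 * G1 ^ 2 ≤ (M':ℝ) * (Δ * G2) := (div_le_iff₀ (by positivity)).mp hM'ge
  have h8 : (M':ℝ) * G2 / 2 < G1 ^ 2 / Δ := by linarith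
  have h9 : (M':ℝ) * G2 / 2 * Δ < G1 ^ 2 := (lt_div_iff₀ hΔpos).mp h8
  nlinarith
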